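/- Plane reproduction for the linear model: Let φ be a strong non-linearity, let μ be a continuous probability density on ℝ^d invariant under the reflection r across the hyperplane P = {x : nᵀx + c = 0} (‖n‖=1), let h : ℝ^d → ℝ≥0 be invariant under r, and let τ be an unsigned similarity (τ(-a,b) = τ(a,b), differentiable in a). Define loss(w,b) = ∫ τ(φ(wᵀx + b), h(x)) μ(x) dx. Then at (w,b) = (αn, αc) for any α > 0, the partial derivative ∂loss/∂b vanishes, and the gradient ∇_w loss is parallel to n. -/

import Mathlib

open RealInnerProductSpace MeasureTheory

/-!
Write `r` for the reflection across the hyperplane `⟪n, x⟫ + c = 0`. It preserves Lebesgue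
measure, and `⟪w, r x⟫ + b = -(⟪w', x⟫ + b')` with `w' = 2⟪n, w⟫ n - w`, `b' = 2c⟪n, w⟫ - b`.
Substituting `x ↦ r x` in the loss and using that `φ` is odd, `τ` even and `h`, `μ` are
`r`-invariant gives `loss w b = loss w' b'`. At `w = α n + t v` with `v ⟂ n` this symmetry reads
`loss (α n + t v) b = loss (α n - t v) (2αc - b)`: the loss is symmetric in `b` about `αc` and
even along every direction orthogonal to `n`, so those derivatives vanish at `(α n, α c)`.
-/

section Reflection

variable {E : Type*} [NormedAddCommGroup E] [InnerProductSpace ℝ E]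

def hyperplaneReflection (n : E) (c : ℝ) (x : E) : E := x - (2 * (⟪n, x⟫ + c)) • n

theorem hyperplaneReflection_eq_reflection_sub {n : E} [(ℝ ∙ n)ᗮ.HasOrthogonalProjection]
    (hn : ‖n‖ = 1) (c : ℝ) (x : E) :
    hyperplaneReflection n c x = (ℝ ∙ n)ᗮ.reflection x - (2 * c) • n := by
  rw [Submodule.reflection_orthogonal_apply, Submodule.reflection_singleton_apply, hn]
  simp only [hyperplaneReflection, RCLike.ofReal_one, one_pow, div_one]
  module

theorem inner_hyperplaneReflection_add (n w x : E) (c b : ℝ) :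
    ⟪w, hyperplaneReflection n c x⟫ + b = -(⟪(2 * ⟪n, w⟫) • n - w, x⟫ + (2 * c * ⟪n, w⟫ - b)) := by
  simp only [hyperplaneReflection, inner_sub_left, inner_sub_right, inner_smul_left,
    inner_smul_right, RCLike.conj_to_real, real_inner_comm w n]
  ring

variable [FiniteDimensional ℝ E] [MeasurableSpace E] [BorelSpace E]
  {G : Type*} [NormedAddCommGroup G] [NormedSpace ℝ G]

theorem integral_comp_hyperplaneReflection {n : E} (hn : ‖n‖ = 1) (c : ℝ) (f : E → G) :
    ∫ x, f (hyperplaneReflection n c x) = ∫ x, f x := by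
  simp only [hyperplaneReflection_eq_reflection_sub hn]
  rw [MeasureTheory.integral_comp _ (fun y => f (y - (2 * c) • n)),
    integral_sub_right_eq_self]

theorem integral_inner_add_eq_of_hyperplaneReflection {n : E} (hn : ‖n‖ = 1) (c : ℝ)
    (F : ℝ → E → G) (hF : ∀ a x, F (-a) (hyperplaneReflection n c x) = F a x) (w : E) (b : ℝ) :
    ∫ x, F (⟪w, x⟫ + b) x = ∫ x, F (⟪(2 * ⟪n, w⟫) • n - w, x⟫ + (2 * c * ⟪n, w⟫ - b)) x := by
  rw [← integral_comp_hyperplaneReflection hn c]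
  simp only [inner_hyperplaneReflection_add, hF]

end Reflection

theorem deriv_eq_zero_of_forall_const_sub_eq {F : Type*} [NormedAddCommGroup F] [NormedSpace ℝ F]
    {f : ℝ → F} {a : ℝ} (hf : ∀ x, f (2 * a - x) = f x) : deriv f a = 0 := by
  have h := deriv_comp_const_sub f (2 * a) a
  rw [funext hf, two_mul, add_sub_cancel_right] at h
  have h2 : (2 : ℝ) • deriv f a = 0 := by
    rw [two_smul]
    nth_rw 2 [h]
    exact add_neg_cancel _
  simpa using h2

theorem fderiv_apply_eq_zero_of_even_along {E F : Type*} [NormedAddCommGroup E] [NormedSpace ℝ E]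
    [NormedAddCommGroup F] [NormedSpace ℝ F] {f : E → F} {p v : E} (hf : DifferentiableAt ℝ f p)
    (heven : ∀ t : ℝ, f (p + (-t) • v) = f (p + t • v)) : fderiv ℝ f p v = 0 := by
  rw [← hf.lineDeriv_eq_fderiv, lineDeriv]
  exact deriv_eq_zero_of_forall_const_sub_eq fun t => by simpa using heven t

theorem exists_gradient_eq_smul_of_even_along_orthogonal {E : Type*} [NormedAddCommGroup E]
    [InnerProductSpace ℝ E] [CompleteSpace E] {f : E → ℝ} {p n : E}
    (hf : DifferentiableAt ℝ f p)
    (heven : ∀ v, ⟪n, v⟫ = 0 → ∀ t : ℝ, f (p + (-t) • v) = f (p + t • v)) :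
    ∃ s : ℝ, gradient f p = s • n := by
  have hmem : gradient f p ∈ (ℝ ∙ n)ᗮᗮ := by
    refine (Submodule.mem_orthogonal _ _).2 fun v hv => ?_
    rw [Submodule.mem_orthogonal_singleton_iff_inner_right] at hv
    rw [real_inner_comm, inner_gradient_left]
    exact fderiv_apply_eq_zero_of_even_along hf (heven v hv)
  rw [Submodule.orthogonal_orthogonal] at hmem
  obtain ⟨s, hs⟩ := Submodule.mem_span_singleton.mp hmem
  exact ⟨s, hs.symm⟩

theorem plane_reproduction_linear_model_general {d : ℕ}
    (φ : ℝ → ℝ) (hφodd : ∀ a : ℝ, φ (-a) = -φ a)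
    (n : EuclideanSpace ℝ (Fin d)) (hn : ‖n‖ = 1) (c : ℝ)
    (μ : EuclideanSpace ℝ (Fin d) → ℝ)
    (hμinv : ∀ x, μ (x - (2 * (⟪n, x⟫ + c)) • n) = μ x)
    (h : EuclideanSpace ℝ (Fin d) → ℝ) (hh0 : ∀ x, 0 ≤ h x)
    (hhinv : ∀ x, h (x - (2 * (⟪n, x⟫ + c)) • n) = h x)
    (τ : ℝ → ℝ → ℝ) (hτeven : ∀ (a b : ℝ), 0 ≤ b → τ (-a) b = τ a b)
    (loss : EuclideanSpace ℝ (Fin d) → ℝ → ℝ)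
    (hloss : ∀ w b, loss w b = ∫ x, τ (φ (⟪w, x⟫ + b)) (h x) * μ x)
    (α : ℝ)
    (hdiffw : DifferentiableAt ℝ (fun w => loss w (α * c)) (α • n)) :
    deriv (fun b => loss (α • n) b) (α * c) = 0 ∧
    ∃ t : ℝ, gradient (fun w => loss w (α * c)) (α • n) = t • n := by
  have hsymm : ∀ w b, loss w b = loss ((2 * ⟪n, w⟫) • n - w) (2 * c * ⟪n, w⟫ - b) := by
    intro w b
    simp only [hloss]
    refine integral_inner_add_eq_of_hyperplaneReflection hn c
      (fun a x => τ (φ a) (h x) * μ x) (fun a x => ?_) w b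
    simp only [hyperplaneReflection, hφodd, hhinv, hμinv, hτeven _ _ (hh0 x)]
  have hslice : ∀ v, ⟪n, v⟫ = 0 → ∀ (t b : ℝ),
      loss (α • n + (-t) • v) (2 * (α * c) - b) = loss (α • n + t • v) b := by
    intro v hv t b
    have hinner : ⟪n, α • n + t • v⟫ = α := by
      rw [inner_add_right, inner_smul_right, inner_smul_right, real_inner_self_eq_norm_sq, hn, hv]
      ring
    rw [hsymm (α • n + t • v), hinner]
    congr 1 <;> [module; ring]
  refine ⟨deriv_eq_zero_of_forall_const_sub_eq fun b => ?_,
    exists_gradient_eq_smul_of_even_along_orthogonal hdiffw fun v hv t => ?_⟩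
  · simpa using hslice 0 (inner_zero_right n) 0 b
  · simpa [two_mul] using hslice v hv t (α * c)

theorem plane_reproduction_linear_model {d : ℕ}
    (φ : ℝ → ℝ) (hφdiff : Differentiable ℝ φ) (hφodd : ∀ a : ℝ, φ (-a) = -φ a)
    (β : ℝ) (hβ : 0 < β) (hβle : ∀ a : ℝ, β ≤ deriv φ a) (hleβ : ∀ a : ℝ, deriv φ a ≤ β⁻¹)
    (n : EuclideanSpace ℝ (Fin d)) (hn : ‖n‖ = 1) (c : ℝ)
    (μ : EuclideanSpace ℝ (Fin d) → ℝ) (hμcont : Continuous μ) (hμ0 : ∀ x, 0 ≤ μ x)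
    (hμinv : ∀ x, μ (x - (2 * (⟪n, x⟫ + c)) • n) = μ x)
    (h : EuclideanSpace ℝ (Fin d) → ℝ) (hh0 : ∀ x, 0 ≤ h x)
    (hhinv : ∀ x, h (x - (2 * (⟪n, x⟫ + c)) • n) = h x)
    (τ : ℝ → ℝ → ℝ) (hτeven : ∀ (a b : ℝ), 0 ≤ b → τ (-a) b = τ a b)
    (hτdiff : ∀ b : ℝ, 0 ≤ b → Differentiable ℝ (fun a => τ a b))
    (loss : EuclideanSpace ℝ (Fin d) → ℝ → ℝ)
    (hloss : ∀ w b, loss w b = ∫ x, τ (φ (⟪w, x⟫ + b)) (h x) * μ x)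
    (hint : ∀ w b, Integrable fun x => τ (φ (⟪w, x⟫ + b)) (h x) * μ x)
    (α : ℝ) (hα : 0 < α)
    (hdiffb : DifferentiableAt ℝ (fun b => loss (α • n) b) (α * c))
    (hdiffw : DifferentiableAt ℝ (fun w => loss w (α * c)) (α • n)) :
    deriv (fun b => loss (α • n) b) (α * c) = 0 ∧
    ∃ t : ℝ, gradient (fun w => loss w (α * c)) (α • n) = t • n :=
  plane_reproduction_linear_model_general φ hφodd n hn c μ hμinv h hh0 hhinv τ hτeven loss hloss α
    hdiffw
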